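/- arXiv:1808.07438 — 2 statements merged into one kernel-verified Lean document; each statement's English description precedes it below -/
import Mathlib

section
/- For integers k ≥ 2 and n ≥ 2k, the map sending i ∈ {0,…,n−1} (viewed as ℤ/nℤ) to ⌊2i/k⌋ viewed as an element of ℤ/⌈2n/k⌉ℤ is a graph homomorphism from the complement of the circular graph C_{k,n} to the complement of the cycle C_{⌈2n/k⌉}. -/
/-- Circular distance between two elements of `ZMod n`. -/
def cyclicDist (n : ℕ) (a b : ZMod n) : ℕ := min (a - b).val (b - a).val

/-- The circular graph `C_{k,n}` on `ZMod n`: distinct vertices are adjacent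
iff their circular distance is strictly less than `k`. -/
def circularGraph (k n : ℕ) : SimpleGraph (ZMod n) where
  Adj u v := u ≠ v ∧ cyclicDist n u v < k
  symm := by
    constructor
    rintro u v ⟨h1, h2⟩
    exact ⟨h1.symm, by simpa [cyclicDist, min_comm] using h2⟩
  loopless := by constructor; rintro u ⟨h, _⟩; exact h rfl

/-- The `d`-th strong product power of a graph. -/
def strongPower {V : Type*} (G : SimpleGraph V) (d : ℕ) : SimpleGraph (Fin d → V) where
  Adj x y := x ≠ y ∧ ∀ i, x i = y i ∨ G.Adj (x i) (y i)
  symm := by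
    constructor
    rintro x y ⟨h1, h2⟩
    exact ⟨h1.symm, fun i => (h2 i).imp Eq.symm (fun h => h.symm)⟩
  loopless := by constructor; rintro x ⟨h, _⟩; exact h rfl

/-- A set of vertices is independent if no two of its elements are adjacent. -/
def IsIndep {V : Type*} (G : SimpleGraph V) (s : Set V) : Prop :=
  ∀ u ∈ s, ∀ v ∈ s, u ≠ v → ¬ G.Adj u v

/-- The independence number of a graph on a finite vertex set. -/
noncomputable def alpha {V : Type*} [Fintype V] (G : SimpleGraph V) : ℕ :=
  sSup {m | ∃ s : Finset V, IsIndep G ↑s ∧ s.card = m}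

/-- The Shannon capacity of a graph. -/
noncomputable def shannonCapacity {V : Type*} [Fintype V] (G : SimpleGraph V) : ℝ :=
  ⨆ d : ℕ+, (alpha (strongPower G d) : ℝ) ^ ((1 : ℝ) / (d : ℝ))

/-!
Write `a > b` for the values of the two vertices and `m = ⌈2n/k⌉`. Non-adjacency in `C_{k,n}`
means `a - b ≥ k` and `n - (a - b) ≥ k`. Doubling and taking floors, the first gap becomes
`⌊2a/k⌋ - ⌊2b/k⌋ ≥ 2`, and since `k m ≥ 2n` the second becomes `m - (⌊2a/k⌋ - ⌊2b/k⌋) ≥ 2`: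
exactly non-adjacency in the cycle `C_m`.
-/

theorem cyclicDist_eq_of_val_lt {n : ℕ} [NeZero n] {u v : ZMod n} (h : v.val < u.val) :
    cyclicDist n u v = min (u.val - v.val) (n - (u.val - v.val)) := by
  have huv : (u - v).val = u.val - v.val := ZMod.val_sub h.le
  have hne : u - v ≠ 0 := fun h0 => by simp [h0] at huv; omega
  rw [cyclicDist, huv, ← neg_sub, ZMod.neg_val, if_neg hne, huv]

theorem compl_circularGraph_adj_iff_of_val_lt {k n : ℕ} [NeZero n] {u v : ZMod n}
    (h : v.val < u.val) :
    (circularGraph k n)ᶜ.Adj u v ↔ v.val + k ≤ u.val ∧ u.val + k ≤ v.val + n := by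
  have hne : u ≠ v := fun huv => by simp [huv] at h
  have hu := u.val_lt
  simp only [SimpleGraph.compl_adj, circularGraph, cyclicDist_eq_of_val_lt h, ne_eq, hne,
    not_false_eq_true, true_and, not_lt, le_min_iff]
  omega

theorem Nat.div_add_le_div_of_add_mul_le {x y c k : ℕ} (hk : 0 < k) (h : x + c * k ≤ y) :
    x / k + c ≤ y / k := by
  rw [Nat.le_div_iff_mul_le hk, add_mul]
  have := Nat.div_mul_le_self x k
  omega

theorem compl_circularGraph_adj_floor_of_val_lt {k n : ℕ} (hk : 0 < k) [NeZero n]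
    {u v : ZMod n} (hvu : v.val < u.val) (h : (circularGraph k n)ᶜ.Adj u v) :
    (circularGraph 2 ((2 * n + k - 1) / k))ᶜ.Adj
      ((2 * u.val / k : ℕ) : ZMod ((2 * n + k - 1) / k))
      ((2 * v.val / k : ℕ) : ZMod ((2 * n + k - 1) / k)) := by
  -- `(2 * n + k - 1) / k` is `⌈2n/k⌉`
  have hmk : 2 * n ≤ (2 * n + k - 1) / k * k := by
    have := Nat.lt_div_mul_add (a := 2 * n + k - 1) hk
    omega
  set m := (2 * n + k - 1) / k
  obtain ⟨hgap, hgap'⟩ := (compl_circularGraph_adj_iff_of_val_lt hvu).1 h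
  have hu := u.val_lt
  have hum : 2 * u.val / k < m := Nat.div_add_le_div_of_add_mul_le (c := 1) hk (by omega)
  have hvm : 2 * v.val / k < m :=
    (Nat.div_le_div_right (c := k) (by omega : 2 * v.val ≤ 2 * u.val)).trans_lt hum
  have : NeZero m := NeZero.of_pos (Nat.zero_lt_of_lt hum)
  have hx : ((2 * u.val / k : ℕ) : ZMod m).val = 2 * u.val / k := ZMod.val_natCast_of_lt hum
  have hy : ((2 * v.val / k : ℕ) : ZMod m).val = 2 * v.val / k := ZMod.val_natCast_of_lt hvm
  have hstep : 2 * v.val / k + 2 ≤ 2 * u.val / k := Nat.div_add_le_div_of_add_mul_le hk (by omega)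
  have hwrap : 2 * u.val / k + 2 ≤ 2 * v.val / k + m := by
    rw [← Nat.add_mul_div_right (2 * v.val) m hk]
    exact Nat.div_add_le_div_of_add_mul_le hk (by omega)
  refine (compl_circularGraph_adj_iff_of_val_lt ?_).2 ?_ <;> rw [hx, hy]
  exacts [by omega, ⟨hstep, hwrap⟩]

theorem stmt5 (k n : ℕ) (hk : 2 ≤ k) (hn : 2 * k ≤ n) (u v : ZMod n)
    (h : (circularGraph k n)ᶜ.Adj u v) :
    (circularGraph 2 ((2 * n + k - 1) / k))ᶜ.Adj
      ((2 * u.val / k : ℕ) : ZMod ((2 * n + k - 1) / k))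
      ((2 * v.val / k : ℕ) : ZMod ((2 * n + k - 1) / k)) := by
  have : NeZero n := ⟨by omega⟩
  rcases lt_trichotomy v.val u.val with hvu | heq | huv
  · exact compl_circularGraph_adj_floor_of_val_lt (by omega) hvu h
  · exact absurd (ZMod.val_injective n heq.symm) h.ne
  · exact (compl_circularGraph_adj_floor_of_val_lt (by omega) huv h.symm).symm
end

section
/- For the 7-cycle C₇, the independence number of the second strong product power satisfies α(C₇²) = 10. -/
/-!
Two consecutive rows `{i, i + 1} × C₇` of `C₇²` have first coordinates that are pairwise equal or
adjacent, so an independent set meets them in a set projecting injectively onto an independent set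
of `C₇`: at most `α(C₇)` points. Every row lies in exactly two of the seven double rows, whence
`2|S| ≤ 7 α(C₇)`. One dimension down the same count, with the clique `{i, i + 1}` meeting an
independent set at most once, gives `2 α(C₇) ≤ 7`. Together `|S| ≤ ⌊21 / 2⌋ = 10`, and an explicit
independent set attains it.
-/

instance {V : Type*} [DecidableEq V] (G : SimpleGraph V) [DecidableRel G.Adj] (s : Finset V) :
    Decidable (IsIndep G ↑s) :=
  decidable_of_iff (∀ u ∈ s, ∀ v ∈ s, u ≠ v → ¬ G.Adj u v) (by simp [IsIndep])

instance (k n : ℕ) : DecidableRel (circularGraph k n).Adj :=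
  fun u v => inferInstanceAs (Decidable (u ≠ v ∧ cyclicDist n u v < k))

instance {V : Type*} [DecidableEq V] (G : SimpleGraph V) [DecidableRel G.Adj] (d : ℕ) :
    DecidableRel (strongPower G d).Adj :=
  fun x y => inferInstanceAs (Decidable (x ≠ y ∧ ∀ i, x i = y i ∨ G.Adj (x i) (y i)))

section Independence

variable {V : Type*} {G : SimpleGraph V}

lemma IsIndep.mono {s t : Set V} (ht : IsIndep G t) (hst : s ⊆ t) : IsIndep G s :=
  fun u hu v hv => ht u (hst hu) v (hst hv)

lemma IsIndep.card_le_one_of_isClique {s : Finset V} (hs : IsIndep G s)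
    (hK : G.IsClique (s : Set V)) : s.card ≤ 1 :=
  Finset.card_le_one.mpr fun u hu v hv => by
    by_contra huv
    exact hs u hu v hv huv (hK hu hv huv)

variable [Fintype V]

lemma IsIndep.card_le_alpha {s : Finset V} (hs : IsIndep G s) : s.card ≤ alpha G :=
  le_csSup ⟨Fintype.card V, by rintro _ ⟨t, -, rfl⟩; exact t.card_le_univ⟩ ⟨s, hs, rfl⟩

lemma alpha_le_of_forall_card_le {m : ℕ} (h : ∀ s : Finset V, IsIndep G s → s.card ≤ m) :
    alpha G ≤ m :=
  csSup_le ⟨0, ∅, by simp [IsIndep]⟩ (by rintro _ ⟨s, hs, rfl⟩; exact h s hs)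

end Independence

lemma strongPower_two_adj {V : Type*} {G : SimpleGraph V} {x y : Fin 2 → V} :
    (strongPower G 2).Adj x y ↔
      x ≠ y ∧ (x 0 = y 0 ∨ G.Adj (x 0) (y 0)) ∧ (x 1 = y 1 ∨ G.Adj (x 1) (y 1)) := by
  simp only [strongPower, Fin.forall_fin_two]

lemma IsIndep.card_le_alpha_of_isClique {V : Type*} [Fintype V] [DecidableEq V]
    {G : SimpleGraph V} {t : Finset (Fin 2 → V)} (ht : IsIndep (strongPower G 2) t)
    {K : Set V} (hK : G.IsClique K) (htK : ∀ x ∈ t, x 0 ∈ K) : t.card ≤ alpha G := by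
  have hsep : ∀ x ∈ t, ∀ y ∈ t, x ≠ y → x 1 ≠ y 1 ∧ ¬ G.Adj (x 1) (y 1) := by
    intro x hx y hy hxy
    have hrow : x 0 = y 0 ∨ G.Adj (x 0) (y 0) := by
      by_cases h : x 0 = y 0
      · exact .inl h
      · exact .inr (hK (htK x hx) (htK y hy) h)
    have := ht x hx y hy hxy
    rw [strongPower_two_adj] at this
    tauto
  have hinj : Set.InjOn (fun x : Fin 2 → V => x 1) t := fun x hx y hy h =>
    by_contra fun hxy => (hsep x hx y hy hxy).1 h
  rw [← Finset.card_image_of_injOn hinj]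
  refine IsIndep.card_le_alpha ?_
  simp only [IsIndep, Finset.coe_image, Set.mem_image, Finset.mem_coe]
  rintro _ ⟨x, hx, rfl⟩ _ ⟨y, hy, rfl⟩ hne
  exact (hsep x hx y hy fun h => hne (h ▸ rfl)).2

section Cycle

variable {n : ℕ}

lemma circularGraph_two_adj_add_one (hn : n ≠ 1) (i : ZMod n) :
    (circularGraph 2 n).Adj i (i + 1) := by
  have hval : (1 : ZMod n).val = 1 := ZMod.val_one'' hn
  refine ⟨fun h => ?_, ?_⟩
  · rw [left_eq_add] at h
    simp [h] at hval
  · exact lt_of_le_of_lt (min_le_right _ _) (by simp [hval])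

lemma isClique_circularGraph_two_pair (hn : n ≠ 1) (i : ZMod n) :
    (circularGraph 2 n).IsClique {i, i + 1} :=
  SimpleGraph.isClique_pair.2 fun _ => circularGraph_two_adj_add_one hn i

variable [NeZero n]

lemma sum_card_filter_eq_or_eq_add_one {α : Type*} (hn : n ≠ 1) (f : α → ZMod n)
    (s : Finset α) :
    ∑ i : ZMod n, (s.filter fun x => f x = i ∨ f x = i + 1).card = 2 * s.card := by
  have hfib : ∑ i : ZMod n, (s.filter fun x => f x = i).card = s.card :=
    (Finset.card_eq_sum_card_fiberwise fun x _ => Finset.mem_univ (f x)).symm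
  have hshift : ∑ i : ZMod n, (s.filter fun x => f x = i + 1).card = s.card :=
    (Fintype.sum_equiv (Equiv.addRight 1) _ _ fun _ => rfl).trans hfib
  have hsplit (i : ZMod n) : (s.filter fun x => f x = i ∨ f x = i + 1).card =
      (s.filter fun x => f x = i).card + (s.filter fun x => f x = i + 1).card := by
    classical
    rw [Finset.filter_or, Finset.card_union_of_disjoint]
    exact Finset.disjoint_filter.2 fun _ _ h1 h2 =>
      (circularGraph_two_adj_add_one hn i).ne (h1.symm.trans h2)
  rw [Finset.sum_congr rfl fun i _ => hsplit i,
    Finset.sum_add_distrib, hfib, hshift, two_mul]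

lemma two_mul_card_le_of_isIndep_circularGraph (hn : n ≠ 1) {s : Finset (ZMod n)}
    (hs : IsIndep (circularGraph 2 n) s) : 2 * s.card ≤ n := by
  rw [← sum_card_filter_eq_or_eq_add_one hn id s]
  calc _ ≤ ∑ _i : ZMod n, 1 := Finset.sum_le_sum fun i _ => ?_
    _ = n := by simp
  refine (hs.mono (Finset.filter_subset _ _)).card_le_one_of_isClique
    ((isClique_circularGraph_two_pair hn i).subset fun x hx => ?_)
  simpa using (Finset.mem_filter.1 hx).2

lemma two_mul_card_le_of_isIndep_strongPower_circularGraph (hn : n ≠ 1)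
    {s : Finset (Fin 2 → ZMod n)} (hs : IsIndep (strongPower (circularGraph 2 n) 2) s) :
    2 * s.card ≤ n * alpha (circularGraph 2 n) := by
  rw [← sum_card_filter_eq_or_eq_add_one hn (fun x => x 0) s]
  calc _ ≤ ∑ _i : ZMod n, alpha (circularGraph 2 n) := Finset.sum_le_sum fun i _ => ?_
    _ = n * alpha (circularGraph 2 n) := by simp
  refine (hs.mono (Finset.filter_subset _ _)).card_le_alpha_of_isClique
    (isClique_circularGraph_two_pair hn i) fun x hx => ?_
  simpa using (Finset.mem_filter.1 hx).2

lemma alpha_circularGraph_two_le (hn : n ≠ 1) : alpha (circularGraph 2 n) ≤ n / 2 :=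
  alpha_le_of_forall_card_le fun _ hs => by
    have := two_mul_card_le_of_isIndep_circularGraph hn hs
    omega

lemma alpha_strongPower_circularGraph_two_le (hn : n ≠ 1) :
    alpha (strongPower (circularGraph 2 n) 2) ≤ n * (n / 2) / 2 :=
  alpha_le_of_forall_card_le fun _ hs => by
    have h₁ := two_mul_card_le_of_isIndep_strongPower_circularGraph hn hs
    have h₂ := Nat.mul_le_mul_left n (alpha_circularGraph_two_le hn)
    omega

end Cycle

def tenIndep : Finset (Fin 2 → ZMod 7) :=
  {![0, 5], ![1, 1], ![1, 3], ![2, 6], ![3, 2], ![3, 4], ![4, 0], ![5, 2], ![5, 5], ![6, 0]}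

lemma isIndep_tenIndep : IsIndep (strongPower (circularGraph 2 7) 2) tenIndep := by decide

theorem stmt19 : alpha (strongPower (circularGraph 2 7) 2) = 10 :=
  le_antisymm (alpha_strongPower_circularGraph_two_le (by norm_num))
    (isIndep_tenIndep.card_le_alpha.trans_eq' (by decide))
end
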